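/- arXiv:1305.1532 — 7 statements merged into one kernel-verified Lean document; each statement's English description precedes it below -/
import Mathlib

section
/- If T is a 2n×2n real symplectic matrix partitioned into 2×2 blocks T_{mk} (1 ≤ m,k ≤ n), then for every m, the sum over l of det(T_{ml}) equals 1, and the sum over l of det(T_{lm}) equals 1. -/
open Matrix Polynomial

noncomputable section

/-- The 2×2 standard symplectic matrix. -/
def J2 : Matrix (Fin 2) (Fin 2) ℝ := !![0, 1; -1, 0]

/-- The 2n×2n block-diagonal symplectic matrix `diag(J₂, ..., J₂)`. -/
def Jblock (n : ℕ) : Matrix (Fin (2 * n)) (Fin (2 * n)) ℝ :=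
  fun i j =>
    if i.val / 2 = j.val / 2 then
      J2 ⟨i.val % 2, by omega⟩ ⟨j.val % 2, by omega⟩
    else 0

/-- The 2×2 block of a 2n×2n matrix at block position (m, k). -/
def blk {n : ℕ} (A : Matrix (Fin (2 * n)) (Fin (2 * n)) ℝ) (m k : Fin n) :
    Matrix (Fin 2) (Fin 2) ℝ :=
  fun i j =>
    A ⟨2 * m.val + i.val, by have := m.isLt; have := i.isLt; omega⟩
      ⟨2 * k.val + j.val, by have := k.isLt; have := j.isLt; omega⟩

/-- `S` has eigenemittances `ε`: the spectrum of `S · J_{2n}` (over ℂ, with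
multiplicity) is `±iε₁, ..., ±iε_n`. -/
def hasEigenemittances {n : ℕ} (S : Matrix (Fin (2 * n)) (Fin (2 * n)) ℝ)
    (ε : Fin n → ℝ) : Prop :=
  ((S * Jblock n).map (Complex.ofReal)).charpoly =
    ∏ m : Fin n, ((X - C (Complex.I * (ε m : ℂ))) * (X + C (Complex.I * (ε m : ℂ))))

lemma Jblock_apply (n : ℕ) (i j : Fin (2*n)) : Jblock n i j =
    if j.val = i.val + 1 ∧ i.val % 2 = 0 then 1
    else if i.val = j.val + 1 ∧ j.val % 2 = 0 then -1 else 0 := by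
  unfold Jblock
  rcases Nat.mod_two_eq_zero_or_one i.val with hi | hi <;>
    rcases Nat.mod_two_eq_zero_or_one j.val with hj | hj <;>
    simp only [hi, hj, J2] <;>
    split_ifs with h h1 h2 <;>
    simp_all [Matrix.cons_val_zero, Matrix.cons_val_one, Matrix.head_cons] <;>
    omega

lemma sum2 (n : ℕ) (f : Fin (2*n) → ℝ) :
    ∑ k, f k = ∑ l : Fin n, (f ⟨2*l.val, by omega⟩ + f ⟨2*l.val+1, by omega⟩) := by
  have hb : Function.Bijective
      (fun p : Fin n × Fin 2 => (⟨2*p.1.val + p.2.val, by omega⟩ : Fin (2*n))) := by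
    constructor
    · rintro ⟨a,b⟩ ⟨c,d⟩ h
      simp only [Fin.mk.injEq] at h
      have := b.isLt; have := d.isLt
      have h1 : a.val = c.val ∧ b.val = d.val := by omega
      simp [Prod.ext_iff, Fin.ext_iff, h1.1, h1.2]
    · intro k
      have := k.isLt
      exact ⟨(⟨k.val/2, by omega⟩, ⟨k.val%2, by omega⟩), by simp [Fin.ext_iff]; omega⟩
  rw [← Fintype.sum_bijective _ hb _ f (fun p => rfl), Fintype.sum_prod_type]
  refine Finset.sum_congr rfl fun l _ => ?_
  rw [Fin.sum_univ_two]
  simp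

lemma mulJ0 (n : ℕ) (T : Matrix (Fin (2*n)) (Fin (2*n)) ℝ) (i : Fin (2*n)) (l : Fin n)
    (h0 : 2*l.val < 2*n) (h1 : 2*l.val+1 < 2*n) :
    (T * Jblock n) i ⟨2*l.val, h0⟩ = - T i ⟨2*l.val+1, h1⟩ := by
  rw [mul_apply, Finset.sum_eq_single (⟨2*l.val+1, h1⟩ : Fin (2*n))]
  · rw [Jblock_apply]
    rw [if_neg (by first | omega | (simp only [Fin.val_mk, true_and, and_true] <;> omega) | (simp only [Fin.val_mk, true_and, and_true])), if_pos (by first | omega | (simp only [Fin.val_mk, true_and, and_true] <;> omega) | (simp only [Fin.val_mk, true_and, and_true]))]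
    ring
  · intro c _ hc
    have hc' : c.val ≠ 2*l.val+1 := fun h => hc (Fin.ext h)
    rw [Jblock_apply]
    rw [if_neg (by first | omega | (simp only [Fin.val_mk, true_and, and_true] <;> omega) | (simp only [Fin.val_mk, true_and, and_true])), if_neg (by first | omega | (simp only [Fin.val_mk, true_and, and_true] <;> omega) | (simp only [Fin.val_mk, true_and, and_true])), mul_zero]
  · simp

lemma mulJ1 (n : ℕ) (T : Matrix (Fin (2*n)) (Fin (2*n)) ℝ) (i : Fin (2*n)) (l : Fin n)
    (h0 : 2*l.val < 2*n) (h1 : 2*l.val+1 < 2*n) :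
    (T * Jblock n) i ⟨2*l.val+1, h1⟩ = T i ⟨2*l.val, h0⟩ := by
  rw [mul_apply, Finset.sum_eq_single (⟨2*l.val, h0⟩ : Fin (2*n))]
  · rw [Jblock_apply]
    rw [if_pos (by first | omega | (simp only [Fin.val_mk, true_and, and_true] <;> omega) | (simp only [Fin.val_mk, true_and, and_true]))]
    ring
  · intro c _ hc
    have hc' : c.val ≠ 2*l.val := fun h => hc (Fin.ext h)
    rw [Jblock_apply]
    rw [if_neg (by first | omega | (simp only [Fin.val_mk, true_and, and_true] <;> omega) | (simp only [Fin.val_mk, true_and, and_true])), if_neg (by first | omega | (simp only [Fin.val_mk, true_and, and_true] <;> omega) | (simp only [Fin.val_mk, true_and, and_true])), mul_zero]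
  · simp

lemma key (n : ℕ) (T : Matrix (Fin (2*n)) (Fin (2*n)) ℝ) (m : Fin n)
    (h0 : 2*m.val < 2*n) (h1 : 2*m.val+1 < 2*n) :
    (T * Jblock n * Tᵀ) ⟨2*m.val, h0⟩ ⟨2*m.val+1, h1⟩ = ∑ l : Fin n, (blk T m l).det := by
  rw [mul_apply, sum2]
  refine Finset.sum_congr rfl fun l _ => ?_
  have hl0 : 2*l.val < 2*n := by have := l.isLt; omega
  have hl1 : 2*l.val+1 < 2*n := by have := l.isLt; omega
  rw [mulJ0 n T _ l hl0 hl1, mulJ1 n T _ l hl0 hl1]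
  simp only [transpose_apply, Matrix.det_fin_two, blk, Fin.val_zero, Fin.val_one, add_zero]
  ring

lemma rowsum (n : ℕ) (T : Matrix (Fin (2*n)) (Fin (2*n)) ℝ)
    (hT : T * Jblock n * Tᵀ = Jblock n) (m : Fin n) :
    ∑ l : Fin n, (blk T m l).det = 1 := by
  have h0 : 2*m.val < 2*n := by have := m.isLt; omega
  have h1 : 2*m.val+1 < 2*n := by have := m.isLt; omega
  rw [← key n T m h0 h1, hT, Jblock_apply, if_pos (by first | omega | (simp only [Fin.val_mk, true_and, and_true] <;> omega) | (simp only [Fin.val_mk, true_and, and_true]))]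

lemma JJt (n : ℕ) : Jblock n * (Jblock n)ᵀ = 1 := by
  ext i j
  rw [mul_apply]
  rcases Nat.mod_two_eq_zero_or_one i.val with hi | hi
  · rw [Finset.sum_eq_single (⟨i.val+1, by have := i.isLt; omega⟩ : Fin (2*n))]
    · simp only [transpose_apply, Jblock_apply, Matrix.one_apply, Fin.ext_iff, Fin.val_mk, true_and, and_true]
      split_ifs <;> first | ring1 | (exfalso; omega)
    · intro c _ hc
      have hc' : c.val ≠ i.val+1 := fun h => hc (Fin.ext h)
      rw [Jblock_apply, if_neg (by first | omega | (simp only [Fin.val_mk, true_and, and_true] <;> omega) | (simp only [Fin.val_mk, true_and, and_true])), if_neg (by first | omega | (simp only [Fin.val_mk, true_and, and_true] <;> omega) | (simp only [Fin.val_mk, true_and, and_true])), zero_mul]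
    · simp
  · rw [Finset.sum_eq_single (⟨i.val-1, by have := i.isLt; omega⟩ : Fin (2*n))]
    · simp only [transpose_apply, Jblock_apply, Matrix.one_apply, Fin.ext_iff, Fin.val_mk, true_and, and_true]
      split_ifs <;> first | ring1 | (exfalso; omega)
    · intro c _ hc
      have hc' : c.val ≠ i.val-1 := fun h => hc (Fin.ext h)
      rw [Jblock_apply, if_neg (by first | omega | (simp only [Fin.val_mk, true_and, and_true] <;> omega) | (simp only [Fin.val_mk, true_and, and_true])), if_neg (by first | omega | (simp only [Fin.val_mk, true_and, and_true] <;> omega) | (simp only [Fin.val_mk, true_and, and_true])), zero_mul]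
    · simp

lemma Jt (n : ℕ) : (Jblock n)ᵀ = -(Jblock n) := by
  ext i j
  simp only [transpose_apply, Matrix.neg_apply, Jblock_apply]
  split_ifs <;> first | ring1 | (exfalso; omega)

lemma colsym (n : ℕ) (T : Matrix (Fin (2*n)) (Fin (2*n)) ℝ)
    (hT : T * Jblock n * Tᵀ = Jblock n) :
    Tᵀ * Jblock n * T = Jblock n := by
  have hTB : T * (Jblock n * Tᵀ * (Jblock n)ᵀ) = 1 := by
    calc T * (Jblock n * Tᵀ * (Jblock n)ᵀ)
        = (T * Jblock n * Tᵀ) * (Jblock n)ᵀ := by simp only [Matrix.mul_assoc]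
      _ = 1 := by rw [hT, JJt]
  have hBT : Jblock n * Tᵀ * (Jblock n)ᵀ * T = 1 := mul_eq_one_comm.mp hTB
  have hJtJ : (Jblock n)ᵀ * Jblock n = 1 := mul_eq_one_comm.mp (JJt n)
  have h2 : (Jblock n)ᵀ * (Jblock n * Tᵀ * (Jblock n)ᵀ * T) = (Jblock n)ᵀ := by
    rw [hBT, mul_one]
  rw [show (Jblock n)ᵀ * (Jblock n * Tᵀ * (Jblock n)ᵀ * T)
      = ((Jblock n)ᵀ * Jblock n) * (Tᵀ * (Jblock n)ᵀ * T) by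
    simp only [Matrix.mul_assoc]] at h2
  rw [hJtJ, one_mul] at h2
  rw [Jt] at h2
  rw [Matrix.mul_neg, Matrix.neg_mul, neg_inj] at h2
  exact h2

/-- If `T` is a 2n×2n real symplectic matrix, then for every `m` the sum of the
determinants of the 2×2 blocks in the m-th block row (resp. column) equals 1. -/
theorem stmt1 (n : ℕ) (T : Matrix (Fin (2 * n)) (Fin (2 * n)) ℝ)
    (hT : T * Jblock n * Tᵀ = Jblock n) (m : Fin n) :
    (∑ l : Fin n, (blk T m l).det) = 1 ∧ (∑ l : Fin n, (blk T l m).det) = 1 := by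
  constructor
  · exact rowsum n T hT m
  · have h := rowsum n Tᵀ (colsym n T hT) m
    have hb : ∀ l, (blk Tᵀ m l).det = (blk T l m).det := by
      intro l
      have : blk Tᵀ m l = (blk T l m)ᵀ := rfl
      rw [this, Matrix.det_transpose]
    simpa [hb] using h
end
end

section
/- (Williamson normal form, existence) For every 2n×2n real symmetric positive definite matrix Σ there exist a symplectic matrix M and positive real numbers ε₁,...,ε_n such that M·Σ·Mᵀ = diag(Λ,Λ) with Λ = diag(ε₁,...,ε_n). -/
open Matrix Polynomial

noncomputable section

/-- The standard 2n×2n symplectic form in the `(q₁,...,q_n,p₁,...,p_n)` ordering. -/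
def Jstd (n : ℕ) : Matrix (Fin n ⊕ Fin n) (Fin n ⊕ Fin n) ℝ :=
  Matrix.fromBlocks 0 1 (-1) 0

/-!
Choose `P` with `Pᵀ S P = 1` (write `S = Bᵀ B` and take `P = B⁻¹`). Then `A = Pᵀ J P` is
skew-symmetric and invertible, so `-A²` is symmetric and positive: for a unit eigenvector `x`, the
vectors `x` and `A x / ‖A x‖` span an `A`-invariant plane on which `A` acts as `‖A x‖ J₂`, and
skew-symmetry makes the orthogonal complement `A`-invariant as well. Induction on the dimension
gives an orthogonal `O` with `Oᵀ A O = [[0, D], [-D, 0]]`, `D = diag(d) > 0`, and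
`M = diag(D^{-1/2}, D^{-1/2}) Oᵀ Pᵀ` then satisfies `M J Mᵀ = J` and `M S Mᵀ = diag(D⁻¹, D⁻¹)`.
-/

open scoped RealInnerProductSpace MatrixOrder

section SkewAdjoint

variable {E : Type*} [NormedAddCommGroup E] [InnerProductSpace ℝ E] {T : E →ₗ[ℝ] E}

lemma apply_mem_orthogonal_of_skew (hT : ∀ x y, ⟪T x, y⟫ = -⟪x, T y⟫) {p : Submodule ℝ E}
    (hp : ∀ x ∈ p, T x ∈ p) : ∀ x ∈ pᗮ, T x ∈ pᗮ := by
  intro x hx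
  rw [Submodule.mem_orthogonal] at hx ⊢
  intro y hy
  rw [← neg_eq_zero, ← hT, hx _ (hp y hy)]

lemma exists_orthonormal_pair_of_skew [FiniteDimensional ℝ E] [Nontrivial E]
    (hT : ∀ x y, ⟪T x, y⟫ = -⟪x, T y⟫) (hinj : Function.Injective T) :
    ∃ x y : E, ∃ c : ℝ, 0 < c ∧ Orthonormal ℝ ![x, y] ∧ T x = -c • y ∧ T y = c • x := by
  have hB : (-(T ∘ₗ T)).IsSymmetric := fun a b ↦ by simp [hT]
  obtain ⟨μ, hμ⟩ : ∃ μ, Module.End.HasEigenvalue (-(T ∘ₗ T)) μ :=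
    ⟨_, hB.hasEigenvalue_iSup_of_finiteDimensional⟩
  obtain ⟨x₀, hx₀⟩ := hμ.exists_hasEigenvector
  set x := ‖x₀‖⁻¹ • x₀
  have hx : ‖x‖ = 1 := norm_smul_inv_norm hx₀.2
  have hTTx : T (T x) = -μ • x := by
    have h := hx₀.apply_eq_smul
    simp only [LinearMap.neg_apply, LinearMap.comp_apply, neg_eq_iff_eq_neg] at h
    simp [x, h, smul_comm ‖x₀‖⁻¹ μ]
  have hTx : T x ≠ 0 := by
    rw [Ne, ← map_zero T, hinj.eq_iff, ← norm_eq_zero, hx]; exact one_ne_zero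
  set c := ‖T x‖
  have hc : 0 < c := norm_pos_iff.mpr hTx
  have hμc : μ = c ^ 2 := by
    rw [← real_inner_self_eq_norm_sq, hT, hTTx, real_inner_smul_right,
      real_inner_self_eq_norm_sq, hx]
    ring
  refine ⟨x, -c⁻¹ • T x, c, hc, ?_, by simp [smul_smul, hc.ne'], ?_⟩
  · have hxTx : ⟪x, T x⟫ = 0 := by linarith [hT x x, real_inner_comm x (T x)]
    simp [orthonormal_vecCons_iff, hx, real_inner_smul_right, hxTx, norm_smul,
      inv_mul_cancel₀ hc.ne', c]
  · rw [map_smul, hTTx, hμc, smul_smul]; congr 1; field_simp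

lemma Orthonormal.sumElim_cons {m : ℕ} {x y : E} {u w : Fin m → E}
    (hxy : Orthonormal ℝ ![x, y]) (huw : Orthonormal ℝ (Sum.elim u w))
    (hx : ∀ i, ⟪x, Sum.elim u w i⟫ = 0) (hy : ∀ i, ⟪y, Sum.elim u w i⟫ = 0) :
    Orthonormal ℝ (Sum.elim (Fin.cons x u : Fin (m + 1) → E) (Fin.cons y w)) := by
  obtain ⟨hx1, hxy0, hy1⟩ : ‖x‖ = 1 ∧ ⟪x, y⟫ = 0 ∧ ‖y‖ = 1 := by
    simpa [orthonormal_vecCons_iff] using hxy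
  rw [orthonormal_iff_ite] at huw ⊢
  have hx' (i) : ⟪Sum.elim u w i, x⟫ = 0 := by rw [real_inner_comm, hx]
  have hy' (i) : ⟪Sum.elim u w i, y⟫ = 0 := by rw [real_inner_comm, hy]
  simp only [Sum.forall, Sum.elim_inl, Sum.elim_inr, Sum.inl.injEq, Sum.inr.injEq,
    reduceCtorEq, if_false] at huw hx hy hx' hy'
  rintro (i | i) (j | j) <;> cases i using Fin.cases <;> cases j using Fin.cases <;>
    simp [hx1, hy1, hxy0, real_inner_comm x y, huw, hx, hy, hx', hy', Fin.succ_ne_zero,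
      (Fin.succ_ne_zero _).symm]

theorem exists_orthonormal_skew_normal_form [FiniteDimensional ℝ E] {m : ℕ}
    (hE : Module.finrank ℝ E = 2 * m) (hT : ∀ x y, ⟪T x, y⟫ = -⟪x, T y⟫)
    (hinj : Function.Injective T) :
    ∃ (u w : Fin m → E) (d : Fin m → ℝ), Orthonormal ℝ (Sum.elim u w) ∧ (∀ i, 0 < d i) ∧
      (∀ i, T (u i) = -d i • w i) ∧ ∀ i, T (w i) = d i • u i := by
  induction m generalizing E with
  | zero =>
    exact ⟨Fin.elim0, Fin.elim0, Fin.elim0, .of_isEmpty _, (·.elim0), (·.elim0), (·.elim0)⟩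
  | succ m ih =>
    have : Nontrivial E := Module.nontrivial_of_finrank_pos (R := ℝ) (by omega)
    obtain ⟨x, y, c, hc, hxy, hTx, hTy⟩ := exists_orthonormal_pair_of_skew hT hinj
    set K := Submodule.span ℝ (Set.range ![x, y])
    have hxK : x ∈ K := Submodule.subset_span ⟨0, rfl⟩
    have hyK : y ∈ K := Submodule.subset_span ⟨1, rfl⟩
    have hTK : ∀ z ∈ K, T z ∈ K := by
      refine fun z hz ↦ (Submodule.span_le (p := K.comap T)).mpr ?_ hz
      rintro _ ⟨i, rfl⟩
      fin_cases i
      · simpa [hTx] using K.smul_mem (-c) hyK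
      · simpa [hTy] using K.smul_mem c hxK
    have hK : Module.finrank ℝ Kᗮ = 2 * m := by
      have := K.finrank_add_finrank_orthogonal
      rw [finrank_span_eq_card hxy.linearIndependent, Fintype.card_fin] at this
      omega
    set T' : Kᗮ →ₗ[ℝ] Kᗮ := T.restrict (apply_mem_orthogonal_of_skew hT hTK)
    obtain ⟨u, w, d, huw, hd, hTu, hTw⟩ := ih hK (T := T') (fun a b ↦ hT a b)
      (fun a b h ↦ Subtype.ext (hinj congr($h.1)))
    refine ⟨Fin.cons x (Kᗮ.subtype ∘ u), Fin.cons y (Kᗮ.subtype ∘ w), Fin.cons c d,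
      ?_, Fin.cases hc hd, ?_, ?_⟩
    · have hperp {z : E} (hz : z ∈ K) (i) :
          ⟪z, Sum.elim (Kᗮ.subtype ∘ u) (Kᗮ.subtype ∘ w) i⟫ = 0 :=
        K.inner_right_of_mem_orthogonal hz (by cases i <;> simp)
      refine hxy.sumElim_cons ?_ (hperp hxK) (hperp hyK)
      rw [← Sum.comp_elim]
      exact huw.comp_linearIsometry Kᗮ.subtypeₗᵢ
    · refine Fin.cases hTx fun i ↦ ?_
      simpa [T'] using congr($(hTu i).1)
    · refine Fin.cases hTy fun i ↦ ?_
      simpa [T'] using congr($(hTw i).1)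

end SkewAdjoint

namespace Matrix

variable {ι κ : Type*} [Fintype ι] [DecidableEq ι]

def skewBlocks (d : ι → ℝ) : Matrix (ι ⊕ ι) (ι ⊕ ι) ℝ :=
  fromBlocks 0 (diagonal d) (-diagonal d) 0

lemma diagonal_mul_skewBlocks_mul_diagonal (e d : ι → ℝ) :
    diagonal (Sum.elim e e) * skewBlocks d * diagonal (Sum.elim e e) = skewBlocks (e * d * e) := by
  simp [skewBlocks, ← fromBlocks_diagonal, fromBlocks_multiply, diagonal_mul_diagonal]

lemma transpose_mul_mul_of_columns_apply [Fintype κ] (B : Matrix ι ι ℝ)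
    (v : κ → EuclideanSpace ℝ ι) (i j : κ) :
    ((of fun k l ↦ v l k)ᵀ * B * of fun k l ↦ v l k) i j = ⟪v i, toEuclideanLin B (v j)⟫ := by
  simp only [mul_apply, EuclideanSpace.inner_eq_star_dotProduct, dotProduct, mulVec,
    Finset.sum_mul, transpose_apply, of_apply, star_trivial, toLpLin_apply]
  rw [Finset.sum_comm]
  exact Finset.sum_congr rfl fun _ _ ↦ Finset.sum_congr rfl fun _ _ ↦ by ring

lemma PosDef.exists_isUnit_transpose_mul_mul_eq_one {S : Matrix ι ι ℝ} (hS : S.PosDef) :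
    ∃ P : Matrix ι ι ℝ, IsUnit P ∧ Pᵀ * S * P = 1 := by
  obtain ⟨B, hB, rfl⟩ :=
    CStarAlgebra.isStrictlyPositive_iff_eq_star_mul_self.mp hS.isStrictlyPositive
  refine ⟨B⁻¹, (isUnit_nonsing_inv_iff).mpr hB, ?_⟩
  rw [star_eq_conjTranspose, conjTranspose_eq_transpose_of_trivial, transpose_nonsing_inv]
  have hBt : IsUnit Bᵀ.det := by simpa [det_transpose] using (isUnit_iff_isUnit_det B).mp hB
  rw [← Matrix.mul_assoc, nonsing_inv_mul _ hBt, Matrix.one_mul,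
    mul_nonsing_inv _ ((isUnit_iff_isUnit_det B).mp hB)]

theorem exists_orthogonal_transpose_mul_mul_eq_skewBlocks {n : ℕ}
    {A : Matrix (Fin n ⊕ Fin n) (Fin n ⊕ Fin n) ℝ} (hAt : Aᵀ = -A) (hA : IsUnit A) :
    ∃ (O : Matrix (Fin n ⊕ Fin n) (Fin n ⊕ Fin n) ℝ) (d : Fin n → ℝ),
      Oᵀ * O = 1 ∧ (∀ i, 0 < d i) ∧ Oᵀ * A * O = skewBlocks d := by
  have hT (x y) : ⟪toEuclideanLin A x, y⟫ = -⟪x, toEuclideanLin A y⟫ := by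
    rw [← LinearMap.adjoint_inner_right, ← toEuclideanLin_conjTranspose_eq_adjoint,
      conjTranspose_eq_transpose_of_trivial, hAt, map_neg, LinearMap.neg_apply, inner_neg_right]
  have hinj : Function.Injective (toEuclideanLin A) := fun x y h ↦
    WithLp.ofLp_injective 2 (mulVec_injective_iff_isUnit.mpr hA congr(WithLp.ofLp $h))
  obtain ⟨u, w, d, huw, hd, hTu, hTw⟩ :=
    exists_orthonormal_skew_normal_form (m := n) (by simp [two_mul]) hT hinj
  have hinner := orthonormal_iff_ite.mp huw
  simp only [Sum.forall, Sum.elim_inl, Sum.elim_inr, Sum.inl.injEq, Sum.inr.injEq,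
    reduceCtorEq, if_false] at hinner
  refine ⟨of fun k l ↦ Sum.elim u w l k, d, ?_, hd, ?_⟩
  · ext i j
    simpa [one_apply, orthonormal_iff_ite.mp huw] using
      transpose_mul_mul_of_columns_apply 1 (Sum.elim u w) i j
  · ext (i | i) (j | j) <;>
      simp [transpose_mul_mul_of_columns_apply, hTu, hTw, inner_smul_right, hinner, skewBlocks,
        diagonal_apply] <;>
      split_ifs with hij <;> simp [hij]

end Matrix

lemma Jstd_eq_skewBlocks_one (n : ℕ) : Jstd n = skewBlocks 1 := by
  simp [Jstd, skewBlocks]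

lemma Jstd_transpose (n : ℕ) : (Jstd n)ᵀ = -Jstd n := by
  simp [Jstd, fromBlocks_transpose, fromBlocks_neg]

lemma Jstd_mul_self (n : ℕ) : Jstd n * Jstd n = -1 := by
  simp [Jstd, fromBlocks_multiply, fromBlocks_neg, ← fromBlocks_one]

lemma isUnit_Jstd (n : ℕ) : IsUnit (Jstd n) :=
  (isUnit_iff_isUnit_det _).mpr <| isUnit_det_of_right_inverse (B := -Jstd n) <| by
    rw [Matrix.mul_neg, Jstd_mul_self, neg_neg]

/-- Williamson normal form, existence: every symmetric positive definite `S` can be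
symplectically congruent-diagonalized as `M S Mᵀ = diag(Λ, Λ)`. -/
theorem stmt8 (n : ℕ) (S : Matrix (Fin n ⊕ Fin n) (Fin n ⊕ Fin n) ℝ) (hS : S.PosDef) :
    ∃ (M : Matrix (Fin n ⊕ Fin n) (Fin n ⊕ Fin n) ℝ) (ε : Fin n → ℝ),
      M * Jstd n * Mᵀ = Jstd n ∧ (∀ m, 0 < ε m) ∧
      M * S * Mᵀ =
        Matrix.fromBlocks (Matrix.diagonal ε) 0 0 (Matrix.diagonal ε) := by
  obtain ⟨P, hP, hPSP⟩ := hS.exists_isUnit_transpose_mul_mul_eq_one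
  obtain ⟨O, d, hO, hd, hOAO⟩ := exists_orthogonal_transpose_mul_mul_eq_skewBlocks
    (A := Pᵀ * Jstd n * P) (by simp [transpose_mul, Jstd_transpose, Matrix.mul_assoc])
    ((((isUnit_transpose P).mpr hP).mul (isUnit_Jstd n)).mul hP)
  set e : Fin n → ℝ := fun i ↦ √(d i)⁻¹
  have he (i : Fin n) : e i * e i = (d i)⁻¹ := Real.mul_self_sqrt (inv_pos.mpr (hd i)).le
  refine ⟨diagonal (Sum.elim e e) * Oᵀ * Pᵀ, fun i ↦ (d i)⁻¹, ?_, fun i ↦ inv_pos.mpr (hd i), ?_⟩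
  · calc _ = diagonal (Sum.elim e e) * (Oᵀ * (Pᵀ * Jstd n * P) * O) *
            diagonal (Sum.elim e e) := by simp [transpose_mul, Matrix.mul_assoc]
      _ = skewBlocks (e * d * e) := by rw [hOAO, diagonal_mul_skewBlocks_mul_diagonal]
      _ = Jstd n := by
          rw [Jstd_eq_skewBlocks_one]
          congr 1
          ext i
          simp [mul_right_comm _ (d i), he, (hd i).ne']
  · calc _ = diagonal (Sum.elim e e) * (Oᵀ * (Pᵀ * S * P) * O) *
            diagonal (Sum.elim e e) := by simp [transpose_mul, Matrix.mul_assoc]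
      _ = _ := by
          rw [hPSP, Matrix.mul_one, hO, Matrix.mul_one, diagonal_mul_diagonal, fromBlocks_diagonal]
          congr 1
          ext (i | i) <;> simp [he]
end
end

section
/- (Classical uncertainty principle) Let Σ be a 2n×2n real symmetric positive definite matrix with eigenemittances ε₁,...,ε_n and projected emittances ε̃₁,...,ε̃_n. Then every projected emittance is at least the minimal eigenemittance: ε̃_m ≥ min_k ε_k for all m. -/
open Matrix Polynomial

noncomputable section

open scoped ComplexOrder

/-! Let `e = min_k ε_k` and `R = Σ^{1/2}`. The Hermitian matrix `H = R (iJ) R` has the same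
nonzero spectrum as `Σ (iJ) = i Σ J`, namely `±ε_k`, so every eigenvalue `λ` of `H` has `|λ| ≥ e`
and hence `1 + e H⁻¹ ⪰ 0`. Conjugating by `R` turns this into `Σ + e (iJ) ⪰ 0`, because
`R H⁻¹ R = (iJ)⁻¹ = iJ`. The principal `2 × 2` block of `Σ + e (iJ)` at `(q_m, p_m)` is
`[[a, s + ie], [s - ie, c]]`, and its nonnegative determinant is `ε̃_m² - e²`. -/

section CStarAlgebra

variable {A : Type*} [CStarAlgebra A] [PartialOrder A] [StarOrderedRing A]

theorem one_add_smul_inv_nonneg {h : Aˣ} (hh : IsSelfAdjoint (h : A)) {e : ℝ} (he : 0 ≤ e)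
    (hspec : ∀ x ∈ spectrum ℝ (h : A), e ≤ |x|) :
    0 ≤ 1 + e • ((h⁻¹ : Aˣ) : A) := by
  have hne : ∀ x ∈ spectrum ℝ (h : A), x ≠ 0 := fun x hx =>
    ne_of_mem_of_not_mem hx (h.zero_notMem_spectrum ℝ)
  have hinv : ContinuousOn (fun x : ℝ => x⁻¹) (spectrum ℝ (h : A)) :=
    continuousOn_inv₀.mono hne
  have hcfc : cfc (fun x : ℝ => 1 + e * x⁻¹) (h : A) = 1 + e • ((h⁻¹ : Aˣ) : A) := by
    rw [cfc_const_add 1 (fun x : ℝ => e * x⁻¹) _ (continuousOn_const.mul hinv) hh,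
      cfc_const_mul e _ _ hinv, cfc_inv_id h hh, map_one]
  rw [← hcfc]
  refine cfc_nonneg fun x hx => ?_
  rcases (hne x hx).lt_or_gt with hneg | hpos
  · have hex : e ≤ -x := abs_of_neg hneg ▸ hspec x hx
    rw [show 1 + e * x⁻¹ = (x + e) / x by field_simp [hne x hx]]
    exact div_nonneg_of_nonpos (by linarith) hneg.le
  · positivity

theorem nonneg_add_smul_of_le_norm_spectrum {a t : A} (ha : IsStrictlyPositive a)
    (ht : IsSelfAdjoint t) (htt : t * t = 1) {e : ℝ} (he : 0 ≤ e)
    (hspec : ∀ z ∈ spectrum ℂ (a * t), e ≤ ‖z‖) : 0 ≤ a + e • t := by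
  set r := CFC.sqrt a
  have hr : IsSelfAdjoint r := (CFC.sqrt_nonneg a).isSelfAdjoint
  have hrr : r * r = a := CFC.sqrt_mul_sqrt_self a ha.nonneg
  obtain ⟨ru, hru⟩ : IsUnit r := (CFC.isUnit_sqrt_iff a ha.nonneg).mpr ha.isUnit
  let tu : Aˣ := ⟨t, t, htt, htt⟩
  let h : Aˣ := ru * tu * ru
  have hh : IsSelfAdjoint (h : A) := by
    simpa only [h, Units.val_mul, hru, hr.star_eq] using ht.conjugate r
  have hspec' : ∀ x ∈ spectrum ℝ (h : A), e ≤ |x| := by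
    intro x hx
    have hx0 : x ≠ 0 := ne_of_mem_of_not_mem hx (h.zero_notMem_spectrum ℝ)
    let u : ℂˣ := Units.mk0 (x : ℂ) (by exact_mod_cast hx0)
    -- `r (t r)`, `(t r) r = t a` and `a t` share their nonzero spectrum
    have hxc : (u : ℂ) ∈ spectrum ℂ (a * t) := by
      have := spectrum.algebraMap_mem ℂ hx
      simp only [h, Units.val_mul, hru, mul_assoc] at this
      rwa [Complex.coe_algebraMap, ← Units.val_mk0 (a := (x : ℂ)) (by exact_mod_cast hx0),
        spectrum.unit_mem_mul_comm, mul_assoc, hrr, spectrum.unit_mem_mul_comm] at this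
    simpa [u] using hspec _ hxc
  have hpos := hr.conjugate_nonneg (one_add_smul_inv_nonneg hh he hspec')
  have hcancel : r * ((h⁻¹ : Aˣ) : A) * r = t := by
    rw [← hru, ← Units.val_mul, ← Units.val_mul, show ru * h⁻¹ * ru = tu⁻¹ by simp [h, mul_assoc]]
    rfl
  rwa [mul_add, add_mul, mul_one, hrr, mul_smul_comm, smul_mul_assoc, hcancel] at hpos

end CStarAlgebra

section ComplexMatrix

variable {ι : Type*}

lemma map_ofReal_mul [Fintype ι] (A B : Matrix ι ι ℝ) :
    (A * B).map Complex.ofReal = A.map Complex.ofReal * B.map Complex.ofReal :=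
  Matrix.map_mul (f := Complex.ofRealHom)

lemma isHermitian_I_smul_map_ofReal {J : Matrix ι ι ℝ} (hJ : Jᵀ = -J) :
    (Complex.I • J.map Complex.ofReal).IsHermitian := by
  ext i j
  have hij : J j i = -J i j := by simpa using congr_fun₂ hJ i j
  simp [hij]

lemma I_smul_map_ofReal_mul_self [Fintype ι] [DecidableEq ι] {J : Matrix ι ι ℝ}
    (hJ : J * J = -1) :
    (Complex.I • J.map Complex.ofReal) * (Complex.I • J.map Complex.ofReal) = 1 := by
  rw [smul_mul_smul_comm, Complex.I_mul_I, ← map_ofReal_mul, hJ]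
  simp [Matrix.map_neg, Matrix.map_one]

lemma Matrix.PosDef.map_ofReal [Fintype ι] [DecidableEq ι] {S : Matrix ι ι ℝ} (hS : S.PosDef) :
    (S.map Complex.ofReal).PosDef := by
  open scoped MatrixOrder in
  set B := CFC.sqrt S
  have hB : Bᴴ * B = S := by
    rw [← star_eq_conjTranspose, (CFC.sqrt_nonneg S).isSelfAdjoint.star_eq,
      CFC.sqrt_mul_sqrt_self S hS.posSemidef.nonneg]
  have hSc : S.map Complex.ofReal = (B.map Complex.ofReal)ᴴ * B.map Complex.ofReal := by
    rw [← hB, map_ofReal_mul, conjTranspose_map _ fun x => by simp]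
  have hunit : IsUnit (S.map Complex.ofReal) := hS.isUnit.map Complex.ofRealHom.mapMatrix
  rw [hSc] at hunit ⊢
  exact (posSemidef_conjTranspose_mul_self _).posDef_iff_isUnit.mpr hunit

open scoped Matrix.Norms.L2Operator MatrixOrder in
theorem Matrix.PosDef.posSemidef_add_smul_of_le_norm_spectrum [Fintype ι] [DecidableEq ι]
    {S T : Matrix ι ι ℂ} (hS : S.PosDef) (hT : T.IsHermitian) (hTT : T * T = 1) {e : ℝ}
    (he : 0 ≤ e) (hspec : ∀ z ∈ spectrum ℂ (S * T), e ≤ ‖z‖) : (S + e • T).PosSemidef :=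
  (nonneg_add_smul_of_le_norm_spectrum hS.isStrictlyPositive hT hTT he hspec).posSemidef

end ComplexMatrix

section Symplectic

def pairEquiv (n : ℕ) : Fin 2 × Fin n ≃ Fin (2 * n) :=
  (Equiv.prodComm _ _).trans (finProdFinEquiv.trans (finCongr (Nat.mul_comm n 2)))

@[simp]
lemma pairEquiv_apply_val {n : ℕ} (p : Fin 2 × Fin n) : (pairEquiv n p : ℕ) = p.1 + 2 * p.2 := by
  simp [pairEquiv]

lemma Jblock_submatrix_pairEquiv (n : ℕ) :
    (Jblock n).submatrix (pairEquiv n) (pairEquiv n) = blockDiagonal fun _ => J2 := by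
  ext ⟨i, k⟩ ⟨j, l⟩
  have hi := i.isLt
  have hj := j.isLt
  simp only [submatrix_apply, Jblock, pairEquiv_apply_val, blockDiagonal_apply, Fin.ext_iff]
  rw [show (i + 2 * k : ℕ) / 2 = k by omega, show (j + 2 * l : ℕ) / 2 = l by omega]
  split_ifs
  · congr 1 <;> ext <;> simp only <;> omega
  · rfl

lemma Jblock_eq_submatrix_blockDiagonal (n : ℕ) :
    Jblock n =
      (blockDiagonal fun _ : Fin n => J2).submatrix (pairEquiv n).symm (pairEquiv n).symm := by
  rw [← Jblock_submatrix_pairEquiv, submatrix_submatrix, Equiv.self_comp_symm, submatrix_id_id]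

lemma J2_mul_self : J2 * J2 = -1 := by
  ext i j; fin_cases i <;> fin_cases j <;> simp [J2]

lemma J2_transpose : J2ᵀ = -J2 := by
  ext i j; fin_cases i <;> fin_cases j <;> simp [J2]

lemma Jblock_mul_self (n : ℕ) : Jblock n * Jblock n = -1 := by
  rw [Jblock_eq_submatrix_blockDiagonal, submatrix_mul_equiv, ← blockDiagonal_mul, J2_mul_self]
  change (blockDiagonal (-1)).submatrix _ _ = _
  rw [blockDiagonal_neg, blockDiagonal_one]
  exact congrArg Neg.neg (submatrix_one_equiv _)

lemma Jblock_transpose (n : ℕ) : (Jblock n)ᵀ = -Jblock n := by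
  rw [Jblock_eq_submatrix_blockDiagonal, transpose_submatrix, blockDiagonal_transpose, J2_transpose]
  change (blockDiagonal (-fun _ => J2)).submatrix _ _ = _
  rw [blockDiagonal_neg]
  rfl

lemma Jblock_submatrix_pair {n : ℕ} (m : Fin n) :
    (Jblock n).submatrix (fun i => pairEquiv n (i, m)) (fun i => pairEquiv n (i, m)) = J2 := by
  ext i j
  simpa using congr_fun₂ (Jblock_submatrix_pairEquiv n) (i, m) (j, m)

lemma blk_eq_submatrix {n : ℕ} (A : Matrix (Fin (2 * n)) (Fin (2 * n)) ℝ) (m : Fin n) :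
    blk A m m = A.submatrix (fun i => pairEquiv n (i, m)) (fun i => pairEquiv n (i, m)) := by
  ext i j
  simp only [blk, submatrix_apply]
  congr 1 <;> ext <;> simp only [pairEquiv_apply_val] <;> omega

lemma hasEigenemittances.exists_norm_eq {n : ℕ} {S : Matrix (Fin (2 * n)) (Fin (2 * n)) ℝ}
    {ε : Fin n → ℝ} (hε : hasEigenemittances S ε) {z : ℂ}
    (hz : z ∈ spectrum ℂ (S.map Complex.ofReal * (Complex.I • (Jblock n).map Complex.ofReal))) :
    ∃ k, ‖z‖ = |ε k| := by
  have hsmul := spectrum.unit_smul_eq_smul ((S * Jblock n).map Complex.ofReal)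
    (Units.mk0 Complex.I Complex.I_ne_zero)
  rw [Units.smul_def, Units.val_mk0] at hsmul
  rw [mul_smul_comm, ← map_ofReal_mul, hsmul] at hz
  obtain ⟨w, hw, rfl⟩ := hz
  rw [Matrix.mem_spectrum_iff_isRoot_charpoly, hε, Polynomial.isRoot_prod] at hw
  obtain ⟨k, -, hk⟩ := hw
  refine ⟨k, ?_⟩
  suffices ‖w‖ = |ε k| by simpa
  simp only [Polynomial.IsRoot.def, eval_mul, eval_sub, eval_add, eval_X, eval_C, mul_eq_zero,
    sub_eq_zero, add_eq_zero_iff_eq_neg] at hk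
  rcases hk with rfl | rfl <;> simp

lemma sq_le_det_of_posSemidef_add_I_smul_J2 {B : Matrix (Fin 2) (Fin 2) ℝ} (hB : B.IsSymm)
    {e : ℝ} (h : (B.map Complex.ofReal + e • (Complex.I • J2.map Complex.ofReal)).PosSemidef) :
    e ^ 2 ≤ B.det := by
  have hdet := h.det_nonneg
  have hB10 : B 1 0 = B 0 1 := hB.apply 0 1
  rw [det_fin_two] at hdet ⊢
  simp only [J2, Fin.isValue, Matrix.add_apply, map_apply, Matrix.smul_apply, of_apply, cons_val',
    cons_val_zero, cons_val_fin_one, Complex.ofReal_zero, smul_eq_mul, mul_zero, smul_zero,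
    add_zero, cons_val_one, Complex.ofReal_one, mul_one, Complex.real_smul, hB10,
    Complex.ofReal_neg, mul_neg, smul_neg, sub_nonneg] at hdet
  rw [show (B 0 1 + e * Complex.I) * (B 0 1 + -(e * Complex.I)) = ((B 0 1 ^ 2 + e ^ 2 : ℝ) : ℂ) by
    push_cast; linear_combination (-(e : ℂ) ^ 2) * Complex.I_sq] at hdet
  rw [hB10]
  linarith [Complex.real_le_real.mp (by exact_mod_cast hdet)]

end Symplectic

/-- Classical uncertainty principle: every projected emittance is at least the
minimal eigenemittance. -/
theorem stmt13 (n : ℕ) (hn : 0 < n) (S : Matrix (Fin (2 * n)) (Fin (2 * n)) ℝ)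
    (ε : Fin n → ℝ) (hS : S.PosDef) (hpos : ∀ m, 0 < ε m)
    (hε : hasEigenemittances S ε) (m : Fin n) :
    Finset.univ.inf' ⟨⟨0, hn⟩, Finset.mem_univ _⟩ ε ≤ Real.sqrt (blk S m m).det := by
  set e := Finset.univ.inf' ⟨⟨0, hn⟩, Finset.mem_univ _⟩ ε
  have he : 0 < e := (Finset.lt_inf'_iff _).2 fun k _ => hpos k
  have hspec : ∀ z ∈ spectrum ℂ
      (S.map Complex.ofReal * (Complex.I • (Jblock n).map Complex.ofReal)), e ≤ ‖z‖ := by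
    intro z hz
    obtain ⟨k, hk⟩ := hε.exists_norm_eq hz
    rw [hk, abs_of_pos (hpos k)]
    exact Finset.inf'_le _ (Finset.mem_univ k)
  have hP := hS.map_ofReal.posSemidef_add_smul_of_le_norm_spectrum
    (isHermitian_I_smul_map_ofReal (Jblock_transpose n))
    (I_smul_map_ofReal_mul_self (Jblock_mul_self n)) he.le hspec
  have hblk : ((blk S m m).map Complex.ofReal
      + e • (Complex.I • J2.map Complex.ofReal)).PosSemidef := by
    rw [blk_eq_submatrix, ← Jblock_submatrix_pair m]
    exact hP.submatrix _
  exact Real.le_sqrt_of_sq_le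
    (sq_le_det_of_posSemidef_add_I_smul_J2
      (isHermitian_iff_isSymm.mp (hS.isHermitian.submatrix _)) hblk)
end
end

section
/- Let Σ be a 2n×2n real symmetric positive definite matrix with eigenemittances ε₁,...,ε_n and projected emittances ε̃₁,...,ε̃_n. Then Σ is block-diagonal (all off-diagonal 2×2 blocks vanish) if and only if ε̃₁·...·ε̃_n = ε₁·...·ε_n. -/
open Matrix Polynomial

noncomputable section

/-! Reindexing `S` by `(i, m) ↦ 2m + i` turns its 2×2 blocks into the diagonal blocks of a
positive definite `T` on `Fin 2 × Fin n`. The constant term of the characteristic polynomial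
of `S J` gives `det S = ∏ εₘ²`, while the projected emittances multiply to `√(det D)`, where `D`
is the block-diagonal part of `T`. So the claim is the equality case of Fischer's inequality
`det T ≤ det D`. Writing `D = Bᴴ B`, the matrix `M = B⁻ᴴ T B⁻¹` is positive semidefinite with
`tr M = tr (D⁻¹ T) = 2n`, because the diagonal blocks of `D⁻¹ T` are identities. Then
`λ ≤ exp (λ - 1)` on its eigenvalues gives `det M ≤ exp (tr M - 2n) = 1`, with equality only
if every eigenvalue is `1`, i.e. `M = 1`, i.e. `T = D`. -/

namespace Matrix

section Spectral

variable {n : Type*} [Fintype n] [DecidableEq n]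

theorem IsHermitian.eq_one_of_eigenvalues_eq_one {A : Matrix n n ℝ} (hA : A.IsHermitian)
    (h : hA.eigenvalues = 1) : A = 1 := by
  rw [hA.spectral_theorem, h]
  simp

theorem PosSemidef.det_eq_exp_trace_sub_card_iff {M : Matrix n n ℝ} (hM : M.PosSemidef) :
    M.det = Real.exp (M.trace - Fintype.card n) ↔ M = 1 := by
  refine ⟨fun h => ?_, by rintro rfl; simp⟩
  set ev := hM.1.eigenvalues
  have hdet : M.det = ∏ i, ev i := by simpa using hM.1.det_eq_prod_eigenvalues
  have hexp : Real.exp (M.trace - Fintype.card n) = ∏ i, Real.exp (ev i - 1) := by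
    rw [← Real.exp_sum, Finset.sum_sub_distrib, hM.1.trace_eq_sum_eigenvalues]
    simp [ev]
  have hle (i : n) : ev i ≤ Real.exp (ev i - 1) := by
    simpa using Real.add_one_le_exp (ev i - 1)
  have hpos (i : n) : 0 < ev i := by
    have hprod : ∏ i, ev i ≠ 0 := by rw [← hdet, h]; positivity
    exact (hM.eigenvalues_nonneg i).lt_of_ne
      (Finset.prod_ne_zero_iff.mp hprod i (Finset.mem_univ i)).symm
  refine hM.1.eq_one_of_eigenvalues_eq_one (funext fun j => ?_)
  by_contra hj
  have hlt : ev j < Real.exp (ev j - 1) := by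
    simpa using Real.add_one_lt_exp (sub_ne_zero.mpr hj)
  have := Finset.prod_lt_prod (fun i _ => hpos i) (fun i _ => hle i) ⟨j, Finset.mem_univ j, hlt⟩
  rw [← hdet, ← hexp, h] at this
  exact lt_irrefl _ this

open scoped MatrixOrder in
theorem PosSemidef.det_eq_det_iff_of_trace_inv_mul_eq_card {T D : Matrix n n ℝ}
    (hT : T.PosSemidef) (hD : D.PosDef) (htr : (D⁻¹ * T).trace = Fintype.card n) :
    T.det = D.det ↔ T = D := by
  obtain ⟨B, rfl⟩ := CStarAlgebra.nonneg_iff_eq_star_mul_self.mp hD.posSemidef.nonneg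
  have hBdet : IsUnit B.det := by
    have := (isUnit_iff_isUnit_det _).mp hD.isUnit
    rw [det_mul] at this
    exact isUnit_of_mul_isUnit_right this
  have hB : IsUnit B := (isUnit_iff_isUnit_det B).mpr hBdet
  set M := star B⁻¹ * T * B⁻¹ with hM
  have hTM : T = star B * M * B := by
    rw [hM, ← mul_assoc, ← mul_assoc, ← star_mul, nonsing_inv_mul B hBdet, star_one, one_mul,
      mul_assoc, nonsing_inv_mul B hBdet, mul_one]
  have hMtr : M.trace = Fintype.card n := by
    rw [hM, trace_mul_cycle, ← htr, mul_inv_rev, star_eq_conjTranspose, star_eq_conjTranspose,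
      conjTranspose_nonsing_inv]
  have hMpsd : M.PosSemidef := hB.posSemidef_star_left_conjugate_iff.mp (hTM ▸ hT)
  clear_value M
  subst hTM
  have hdet : (star B * M * B).det = (star B * B).det * M.det := by
    simp only [det_mul]; ring
  have hcancel : star B * M * B = star B * B ↔ M = 1 := by
    rw [show star B * B = star B * 1 * B by rw [mul_one], hB.mul_left_inj, hB.star.mul_right_inj]
  rw [hdet, mul_eq_left₀ hD.det_pos.ne', hcancel, ← hMpsd.det_eq_exp_trace_sub_card_iff, hMtr,
    sub_self, Real.exp_zero]

end Spectral

section Blocks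

variable {m o α : Type*}

theorem eq_blockDiagonal_blockDiag_iff [DecidableEq o] [Zero α] (M : Matrix (m × o) (m × o) α) :
    M = blockDiagonal (blockDiag M) ↔ ∀ k k', k ≠ k' → ∀ i j, M (i, k) (j, k') = 0 := by
  constructor
  · intro h k k' hkk' i j
    rw [h, blockDiagonal_apply_ne _ _ _ hkk']
  · intro h
    ext ⟨i, k⟩ ⟨j, k'⟩
    rcases eq_or_ne k k' with rfl | hkk'
    · rw [blockDiagonal_apply_eq, blockDiag_apply]
    · rw [blockDiagonal_apply_ne _ _ _ hkk', h k k' hkk']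

theorem trace_eq_sum_trace_blockDiag [Fintype m] [Fintype o] [AddCommMonoid α]
    (M : Matrix (m × o) (m × o) α) : M.trace = ∑ k, (blockDiag M k).trace := by
  simp only [trace, diag_apply, Fintype.sum_prod_type, blockDiag_apply]
  exact Finset.sum_comm

theorem blockDiag_blockDiagonal_mul [Fintype m] [Fintype o] [DecidableEq o]
    [NonUnitalNonAssocSemiring α] (d : o → Matrix m m α) (M : Matrix (m × o) (m × o) α) (k : o) :
    blockDiag (blockDiagonal d * M) k = d k * blockDiag M k := by
  ext i j
  simp [blockDiag_apply, mul_apply, blockDiagonal_apply, Fintype.sum_prod_type]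

theorem blockDiagonal_inv [Fintype m] [Fintype o] [DecidableEq m] [DecidableEq o] [CommRing α]
    {d : o → Matrix m m α} (hd : ∀ k, IsUnit (d k).det) :
    (blockDiagonal d)⁻¹ = blockDiagonal fun k => (d k)⁻¹ := by
  refine inv_eq_right_inv ?_
  rw [← blockDiagonal_mul, ← blockDiagonal_one]
  congr 1
  funext k
  exact mul_nonsing_inv _ (hd k)

theorem PosDef.blockDiag {T : Matrix (m × o) (m × o) ℝ} (hT : T.PosDef) (k : o) :
    (blockDiag T k).PosDef :=
  hT.submatrix (e := fun i => (i, k)) fun _ _ h => (Prod.ext_iff.mp h).1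

variable [Fintype m] [Fintype o] [DecidableEq m] [DecidableEq o]

open scoped MatrixOrder in
theorem PosDef.blockDiagonal {d : o → Matrix m m ℝ} (hd : ∀ k, (d k).PosDef) :
    (Matrix.blockDiagonal d).PosDef := by
  choose B hB using fun k => CStarAlgebra.nonneg_iff_eq_star_mul_self.mp (hd k).posSemidef.nonneg
  have hpsd : (Matrix.blockDiagonal d).PosSemidef := by
    have := posSemidef_conjTranspose_mul_self (Matrix.blockDiagonal B)
    rwa [blockDiagonal_conjTranspose, ← blockDiagonal_mul,
      show (fun k => (B k)ᴴ * B k) = d from (funext hB).symm] at this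
  rw [hpsd.posDef_iff_det_ne_zero, det_blockDiagonal]
  exact Finset.prod_ne_zero_iff.mpr fun k _ => (hd k).det_pos.ne'

theorem PosDef.det_eq_prod_det_blockDiag_iff {T : Matrix (m × o) (m × o) ℝ} (hT : T.PosDef) :
    T.det = ∏ k, (Matrix.blockDiag T k).det ↔ T = Matrix.blockDiagonal (Matrix.blockDiag T) := by
  have hblk_det (k : o) : IsUnit (Matrix.blockDiag T k).det :=
    (hT.blockDiag k).isUnit.map detMonoidHom
  rw [← det_blockDiagonal]
  refine hT.posSemidef.det_eq_det_iff_of_trace_inv_mul_eq_card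
    (PosDef.blockDiagonal hT.blockDiag) ?_
  rw [blockDiagonal_inv hblk_det, trace_eq_sum_trace_blockDiag]
  simp_rw [blockDiag_blockDiagonal_mul, nonsing_inv_mul _ (hblk_det _)]
  simp [mul_comm]

end Blocks

end Matrix

def blockIndexEquiv (n : ℕ) : Fin 2 × Fin n ≃ Fin (2 * n) :=
  (Equiv.prodComm _ _).trans (finProdFinEquiv.trans (finCongr (Nat.mul_comm n 2)))

theorem blockIndexEquiv_apply {n : ℕ} (i : Fin 2) (m : Fin n) :
    blockIndexEquiv n (i, m) = ⟨2 * m + i, by omega⟩ := by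
  ext
  simp [blockIndexEquiv]
  ring

theorem submatrix_blockIndexEquiv_apply {n : ℕ} (A : Matrix (Fin (2 * n)) (Fin (2 * n)) ℝ)
    (i j : Fin 2) (m k : Fin n) :
    A.submatrix (blockIndexEquiv n) (blockIndexEquiv n) (i, m) (j, k) = blk A m k i j := by
  simp [blockIndexEquiv_apply, blk]

theorem blockDiag_submatrix_blockIndexEquiv {n : ℕ} (A : Matrix (Fin (2 * n)) (Fin (2 * n)) ℝ)
    (m : Fin n) :
    blockDiag (A.submatrix (blockIndexEquiv n) (blockIndexEquiv n)) m = blk A m m := by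
  ext i j
  exact submatrix_blockIndexEquiv_apply A i j m m

theorem Jblock_submatrix_blockIndexEquiv (n : ℕ) :
    (Jblock n).submatrix (blockIndexEquiv n) (blockIndexEquiv n) = blockDiagonal fun _ => J2 := by
  ext ⟨i, m⟩ ⟨j, k⟩
  have hdiv (l : Fin n) (a : Fin 2) : (2 * l.val + a.val) / 2 = l := by omega
  have hmod (l : Fin n) (a : Fin 2) : (2 * l.val + a.val) % 2 = a := by omega
  simp only [submatrix_apply, blockIndexEquiv_apply, Jblock, blockDiagonal_apply, hdiv, hmod,
    Fin.val_inj, Fin.eta]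

theorem det_Jblock (n : ℕ) : (Jblock n).det = 1 := by
  rw [← det_submatrix_equiv_self (blockIndexEquiv n), Jblock_submatrix_blockIndexEquiv,
    det_blockDiagonal]
  simp [J2, det_fin_two_of]

theorem det_eq_prod_sq_of_hasEigenemittances {n : ℕ} {S : Matrix (Fin (2 * n)) (Fin (2 * n)) ℝ}
    {ε : Fin n → ℝ} (hε : hasEigenemittances S ε) : S.det = ∏ m, ε m ^ 2 := by
  have h : (((S * Jblock n).det : ℝ) : ℂ) = ∏ m, (ε m : ℂ) ^ 2 := by
    change Complex.ofRealHom _ = _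
    rw [RingHom.map_det]
    change ((S * Jblock n).map Complex.ofReal).det = _
    rw [det_eq_sign_charpoly_coeff, hε, coeff_zero_eq_eval_zero, eval_prod, Fintype.card_fin,
      Even.neg_one_pow ⟨n, two_mul n⟩, one_mul]
    refine Finset.prod_congr rfl fun m _ => ?_
    simp only [eval_mul, eval_sub, eval_add, eval_X, eval_C]
    linear_combination (-(ε m : ℂ) ^ 2) * Complex.I_sq
  rw [det_mul, det_Jblock, mul_one] at h
  exact_mod_cast h

/-- A positive definite beam matrix is uncoupled (block-diagonal) if and only if
the product of its projected emittances equals the product of its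
eigenemittances. -/
theorem stmt16 (n : ℕ) (S : Matrix (Fin (2 * n)) (Fin (2 * n)) ℝ) (ε : Fin n → ℝ)
    (hS : S.PosDef) (hpos : ∀ m, 0 < ε m) (hε : hasEigenemittances S ε) :
    (∀ m k : Fin n, m ≠ k → blk S m k = 0) ↔
      (∏ m : Fin n, Real.sqrt (blk S m m).det) = ∏ m : Fin n, ε m := by
  have hT : (S.submatrix (blockIndexEquiv n) (blockIndexEquiv n)).PosDef :=
    hS.submatrix (blockIndexEquiv n).injective
  have hblk_nonneg (m : Fin n) : 0 ≤ (blk S m m).det := by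
    simpa [blockDiag_submatrix_blockIndexEquiv] using (hT.blockDiag m).det_pos.le
  have hfischer := hT.det_eq_prod_det_blockDiag_iff
  rw [det_submatrix_equiv_self, det_eq_prod_sq_of_hasEigenemittances hε,
    eq_blockDiagonal_blockDiag_iff] at hfischer
  simp only [blockDiag_submatrix_blockIndexEquiv, submatrix_blockIndexEquiv_apply] at hfischer
  rw [← Real.sqrt_prod _ fun m _ => hblk_nonneg m,
    Real.sqrt_eq_iff_eq_sq (Finset.prod_nonneg fun m _ => hblk_nonneg m)
      (Finset.prod_nonneg fun m _ => (hpos m).le), ← Finset.prod_pow, eq_comm, hfischer]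
  simp only [← Matrix.ext_iff, Matrix.zero_apply]
end
end

section
/- Let Σ be a 4×4 real symmetric positive definite matrix and set I₂ = -tr[(ΣJ₄)²]/2. Then the eigenemittances of Σ are given by ε_{1,2} = √(I₂/2 ± √((I₂/2)² − det Σ)); in particular (I₂/2)² ≥ det Σ, ε₁²+ε₂² = I₂ and ε₁²ε₂² = det Σ. -/
open Matrix Polynomial

noncomputable section

/-! The characteristic polynomial of `M = ΣJ` is `∏ₘ (X² + εₘ²)`, a polynomial in `X²`. Since
`X² - M² = (X - M)(X + M)` and `χ_{-M}(X) = χ_M(-X)` in even dimension, `χ_{M²} = ∏ₘ (X + εₘ²)²`;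
reading off its trace gives `tr[(ΣJ)²] = -2 ∑ εₘ²`, and its constant term together with `det J = 1`
gives `∏ εₘ² = det Σ`. For `n = 2` the numbers `ε₁² ≥ ε₂²` are therefore the roots of
`t² - I₂ t + det Σ`. -/

namespace Matrix

variable {n R : Type*} [Fintype n] [DecidableEq n] [CommRing R]

theorem charpoly_neg (M : Matrix n n R) :
    (-M).charpoly = (-1) ^ Fintype.card n * M.charpoly.comp (-X) := by
  have hmap : (compRingHom (-X : R[X])).mapMatrix M.charmatrix = -(-M).charmatrix := by
    ext i j : 1
    by_cases h : i = j
    · subst h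
      simp only [RingHom.mapMatrix_apply, map_apply, coe_compRingHom, neg_apply,
        charmatrix_apply_eq, sub_comp, X_comp, C_comp, map_neg]
      ring
    · simp [charmatrix_apply_ne _ _ _ h]
  rw [charpoly, charpoly, ← coe_compRingHom_apply, RingHom.map_det, hmap, det_neg, ← mul_assoc,
    ← pow_add, ← two_mul, pow_mul, neg_one_sq, one_pow, one_mul]

theorem expand_charpoly_sq (M : Matrix n n R) :
    expand R 2 (M ^ 2).charpoly = M.charpoly * (-M).charpoly := by
  rw [charpoly, charpoly, charpoly, AlgHom.map_det, ← det_mul]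
  congr 1
  refine matPolyEquiv.injective ?_
  rw [map_mul, matPolyEquiv_charmatrix, matPolyEquiv_charmatrix, show ((expand R 2).mapMatrix (charmatrix (M ^ 2))) =
    ((expand R 2 : R[X] →+* R[X]).mapMatrix (charmatrix (M ^ 2))) from rfl,
    matPolyEquiv_eq_X_pow_sub_C, map_neg, sub_neg_eq_add, mul_add, sub_mul, sub_mul,
    ← (C M).commute_X.eq, ← C_mul, ← sq, ← sq]
  abel

theorem charpoly_sq_of_charpoly_eq_expand (hn : Even (Fintype.card n)) (M : Matrix n n R)
    {p : R[X]} (hp : M.charpoly = expand R 2 p) : (M ^ 2).charpoly = p ^ 2 := by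
  refine expand_injective two_pos ?_
  rw [expand_charpoly_sq, charpoly_neg, hn.neg_one_pow, one_mul, hp, map_pow, sq,
    expand_eq_comp_X_pow, comp_assoc, X_pow_comp, neg_sq]

end Matrix

theorem charpoly_mul_Jblock_of_hasEigenemittances {n : ℕ}
    {S : Matrix (Fin (2 * n)) (Fin (2 * n)) ℝ} {ε : Fin n → ℝ} (h : hasEigenemittances S ε) :
    (S * Jblock n).charpoly = expand ℝ 2 (∏ m, (X + C (ε m ^ 2))) := by
  refine map_injective Complex.ofRealHom Complex.ofReal_injective ?_
  rw [← charpoly_map]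
  refine (h : _).trans ?_
  rw [map_prod, Polynomial.map_prod]
  refine Finset.prod_congr rfl fun m _ => ?_
  have hI : (C Complex.I) ^ 2 = (-1 : ℂ[X]) := by rw [← C_pow, Complex.I_sq, C_neg, C_1]
  rw [map_add, expand_X, expand_C, Polynomial.map_add, Polynomial.map_pow, map_X, Polynomial.map_C,
    map_pow, Complex.ofRealHom_eq_coe, C_mul, C_pow]
  linear_combination -(C (ε m : ℂ)) ^ 2 * hI

theorem trace_sq_mul_Jblock_of_hasEigenemittances {n : ℕ}
    {S : Matrix (Fin (2 * n)) (Fin (2 * n)) ℝ} {ε : Fin n → ℝ} (h : hasEigenemittances S ε) :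
    ((S * Jblock n) ^ 2).trace = -2 * ∑ m, ε m ^ 2 := by
  have hmonic : (∏ m, (X + C (ε m ^ 2))).Monic := monic_prod_of_monic _ _ fun m _ => monic_X_add_C _
  rw [trace_eq_neg_charpoly_nextCoeff, charpoly_sq_of_charpoly_eq_expand (by simp)
    _ (charpoly_mul_Jblock_of_hasEigenemittances h), sq, hmonic.nextCoeff_mul hmonic,
    Monic.nextCoeff_prod _ _ fun m _ => monic_X_add_C _]
  simp only [nextCoeff_X_add_C]
  ring

theorem det_mul_Jblock_of_hasEigenemittances {n : ℕ}
    {S : Matrix (Fin (2 * n)) (Fin (2 * n)) ℝ} {ε : Fin n → ℝ} (h : hasEigenemittances S ε) :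
    (S * Jblock n).det = ∏ m, ε m ^ 2 := by
  rw [det_eq_sign_charpoly_coeff, charpoly_mul_Jblock_of_hasEigenemittances h,
    coeff_zero_eq_eval_zero, expand_eval, eval_prod]
  simp [pow_mul]

theorem Jblock_two_eq_fromBlocks :
    Jblock 2 = (fromBlocks J2 0 0 J2).submatrix finSumFinEquiv.symm finSumFinEquiv.symm := by
  ext i j
  fin_cases i <;> fin_cases j <;> rfl

theorem det_Jblock_two : (Jblock 2).det = 1 := by
  rw [Jblock_two_eq_fromBlocks, det_submatrix_equiv_self, det_fromBlocks_zero₁₂, J2, det_fin_two_of]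
  norm_num

theorem sqrt_sq_half_add_sq_sub_mul {x y : ℝ} (hyx : y ≤ x) (hy : 0 ≤ y) :
    √(((x ^ 2 + y ^ 2) / 2) ^ 2 - x ^ 2 * y ^ 2) = (x ^ 2 - y ^ 2) / 2 := by
  rw [show ((x ^ 2 + y ^ 2) / 2) ^ 2 - x ^ 2 * y ^ 2 = ((x ^ 2 - y ^ 2) / 2) ^ 2 by ring]
  exact Real.sqrt_sq (by nlinarith)

theorem stmt17_general (S : Matrix (Fin (2 * 2)) (Fin (2 * 2)) ℝ)
    (ε₁ ε₂ : ℝ) (hord : ε₂ ≤ ε₁) (hpos : 0 < ε₂)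
    (hε : hasEigenemittances S ![ε₁, ε₂])
    (I₂ : ℝ) (hI : I₂ = -((S * Jblock 2) ^ 2).trace / 2) :
    (I₂ / 2) ^ 2 ≥ S.det ∧
    ε₁ = Real.sqrt (I₂ / 2 + Real.sqrt ((I₂ / 2) ^ 2 - S.det)) ∧
    ε₂ = Real.sqrt (I₂ / 2 - Real.sqrt ((I₂ / 2) ^ 2 - S.det)) ∧
    ε₁ ^ 2 + ε₂ ^ 2 = I₂ ∧
    ε₁ ^ 2 * ε₂ ^ 2 = S.det := by
  have hsum : ε₁ ^ 2 + ε₂ ^ 2 = I₂ := by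
    rw [hI, trace_sq_mul_Jblock_of_hasEigenemittances hε, Fin.sum_univ_two]
    simp
  have hprod : ε₁ ^ 2 * ε₂ ^ 2 = S.det := by
    have := det_mul_Jblock_of_hasEigenemittances hε
    rw [det_mul, det_Jblock_two, mul_one, Fin.prod_univ_two] at this
    simpa using this.symm
  subst hsum
  rw [← hprod, sqrt_sq_half_add_sq_sub_mul hord hpos.le]
  refine ⟨by nlinarith [sq_nonneg (ε₁ ^ 2 - ε₂ ^ 2)], ?_, ?_, rfl, rfl⟩
  · rw [show (ε₁ ^ 2 + ε₂ ^ 2) / 2 + (ε₁ ^ 2 - ε₂ ^ 2) / 2 = ε₁ ^ 2 by ring,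
      Real.sqrt_sq (hpos.le.trans hord)]
  · rw [show (ε₁ ^ 2 + ε₂ ^ 2) / 2 - (ε₁ ^ 2 - ε₂ ^ 2) / 2 = ε₂ ^ 2 by ring, Real.sqrt_sq hpos.le]

/-- Explicit formula for the eigenemittances of a 4×4 beam matrix in terms of the
invariant `I₂ = -tr[(ΣJ₄)²]/2` and `det Σ`. -/
theorem stmt17 (S : Matrix (Fin (2 * 2)) (Fin (2 * 2)) ℝ) (hS : S.PosDef)
    (ε₁ ε₂ : ℝ) (hord : ε₂ ≤ ε₁) (hpos : 0 < ε₂)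
    (hε : hasEigenemittances S ![ε₁, ε₂])
    (I₂ : ℝ) (hI : I₂ = -((S * Jblock 2) ^ 2).trace / 2) :
    (I₂ / 2) ^ 2 ≥ S.det ∧
    ε₁ = Real.sqrt (I₂ / 2 + Real.sqrt ((I₂ / 2) ^ 2 - S.det)) ∧
    ε₂ = Real.sqrt (I₂ / 2 - Real.sqrt ((I₂ / 2) ^ 2 - S.det)) ∧
    ε₁ ^ 2 + ε₂ ^ 2 = I₂ ∧
    ε₁ ^ 2 * ε₂ ^ 2 = S.det :=
  stmt17_general S ε₁ ε₂ hord hpos hε I₂ hI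
end
end

section
/- (Necessity, n=2) Let Σ be a 4×4 real symmetric positive definite matrix with eigenemittances ε₁, ε₂ and projected emittances ε̃₁, ε̃₂. Then ε̃₁ + ε̃₂ ≥ ε₁ + ε₂ and |ε̃₁ − ε̃₂| ≤ |ε₁ − ε₂|. -/
open Matrix Polynomial

noncomputable section

/-!
Writing `Σ = [[A, C], [Cᵀ, B]]`, the characteristic polynomial of `ΣJ₄` is
`λ⁴ + (det A + det B + 2 det C) λ² + det Σ`, so `ε₁² + ε₂² = det A + det B + 2 det C` and
`|ε₁ ε₂| = √det Σ`. Both inequalities then reduce to `√det Σ + |det C| ≤ √det A · √det B`.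
For this, let `N = C B⁻¹ Cᵀ` and let `M = A - N` be the Schur complement, so that
`det Σ = det B · det M` and `det N = (det C)² / det B`; Minkowski's determinant inequality
`√det M + √det N ≤ √det (M + N)` for positive semidefinite `2 × 2` matrices, multiplied by
`√det B`, is exactly the claim.
-/

theorem two_mul_sqrt_mul_le {p q r u v w : ℝ} (hp : 0 ≤ p) (hr : 0 ≤ r) (hq : q ^ 2 ≤ p * r)
    (hu : 0 ≤ u) (hw : 0 ≤ w) (hv : v ^ 2 ≤ u * w) :
    2 * √((p * r - q ^ 2) * (u * w - v ^ 2)) ≤ p * w + r * u - 2 * q * v := by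
  obtain ⟨α, hα0, hα⟩ : ∃ α, 0 ≤ α ∧ α ^ 2 = p * r - q ^ 2 :=
    ⟨_, Real.sqrt_nonneg _, Real.sq_sqrt (by linarith)⟩
  obtain ⟨β, hβ0, hβ⟩ : ∃ β, 0 ≤ β ∧ β ^ 2 = u * w - v ^ 2 :=
    ⟨_, Real.sqrt_nonneg _, Real.sq_sqrt (by linarith)⟩
  rw [← hα, ← hβ, ← mul_pow, Real.sqrt_sq (mul_nonneg hα0 hβ0)]
  -- `(pw + ru)² ≥ 4 pr uw = 4 ((αβ + qv)² + (αv - βq)²)`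
  have hsq : (2 * (α * β + q * v)) ^ 2 ≤ (p * w + r * u) ^ 2 := by
    nlinarith [sq_nonneg (p * w - r * u), sq_nonneg (α * v - β * q)]
  linarith [abs_le_of_sq_le_sq' hsq (by positivity)]

theorem Matrix.PosSemidef.sqrt_det_add_sqrt_det_le {M N : Matrix (Fin 2) (Fin 2) ℝ}
    (hM : M.PosSemidef) (hN : N.PosSemidef) : √M.det + √N.det ≤ √(M + N).det := by
  rw [Real.le_sqrt (by positivity) (hM.add hN).det_nonneg, add_sq, Real.sq_sqrt hM.det_nonneg,
    Real.sq_sqrt hN.det_nonneg, mul_assoc, ← Real.sqrt_mul hM.det_nonneg]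
  have hM10 : M 1 0 = M 0 1 := hM.1.apply 0 1
  have hN10 : N 1 0 = N 0 1 := hN.1.apply 0 1
  have hMdet := hM.det_nonneg
  have hNdet := hN.det_nonneg
  simp only [det_fin_two, add_apply, hM10, hN10, ← sq] at hMdet hNdet ⊢
  have hcross := two_mul_sqrt_mul_le (q := M 0 1) (v := N 0 1) (hM.diag_nonneg (i := 0))
    (hM.diag_nonneg (i := 1)) (by linarith) (hN.diag_nonneg (i := 0)) (hN.diag_nonneg (i := 1))
    (by linarith)
  linarith

theorem Matrix.sqrt_det_fromBlocks_add_abs_det_le {A B C : Matrix (Fin 2) (Fin 2) ℝ}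
    (h : (fromBlocks A C Cᴴ B).PosDef) :
    √(fromBlocks A C Cᴴ B).det + |C.det| ≤ √A.det * √B.det := by
  have hB : B.PosDef := h.submatrix Sum.inr_injective
  let _ : Invertible B := hB.isUnit.invertible
  set Y := C * B⁻¹ * Cᴴ
  have hY : Y.PosSemidef := hB.inv.posSemidef.mul_mul_conjTranspose_same C
  have hAY : (A - Y).PosSemidef := (PosDef.fromBlocks₂₂ A C hB).1 h.posSemidef
  have hdet : (fromBlocks A C Cᴴ B).det = B.det * (A - Y).det := by
    rw [det_fromBlocks₂₂, invOf_eq_nonsing_inv]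
  have hdetY : Y.det = C.det ^ 2 / B.det := by
    simp only [Y, det_mul, det_nonsing_inv, det_conjTranspose, star_trivial, Ring.inverse_eq_inv']
    ring
  have hBdet := hB.det_pos
  have hmink := hAY.sqrt_det_add_sqrt_det_le hY
  rw [sub_add_cancel] at hmink
  calc √(fromBlocks A C Cᴴ B).det + |C.det| = √B.det * (√(A - Y).det + √Y.det) := by
        rw [hdet, hdetY, Real.sqrt_mul hBdet.le, Real.sqrt_div' _ hBdet.le, Real.sqrt_sq_eq_abs]
        field_simp
    _ ≤ √A.det * √B.det := by rw [mul_comm]; gcongr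

theorem hasEigenemittances.det_scalar_sub {n : ℕ} {S : Matrix (Fin (2 * n)) (Fin (2 * n)) ℝ}
    {ε : Fin n → ℝ} (hε : hasEigenemittances S ε) (r : ℝ) :
    (scalar (Fin (2 * n)) r - S * Jblock n).det = ∏ m, (r ^ 2 + ε m ^ 2) := by
  apply Complex.ofReal_injective
  have h := congrArg (eval (r : ℂ)) hε
  rw [eval_charpoly, eval_prod] at h
  rw [Complex.ofReal_prod, ← Complex.ofRealHom_eq_coe, RingHom.map_det, map_sub,
    RingHom.mapMatrix_apply, RingHom.mapMatrix_apply, scalar_apply, diagonal_map (map_zero _),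
    ← scalar_apply]
  refine h.trans (Finset.prod_congr rfl fun m _ => ?_)
  simp only [eval_mul, eval_sub, eval_add, eval_X, eval_C]
  push_cast
  linear_combination -(ε m : ℂ) ^ 2 * Complex.I_sq

theorem Jblock_two : Jblock 2 = !![0, 1, 0, 0; -1, 0, 0, 0; 0, 0, 0, 1; 0, 0, -1, 0] := by
  ext i j
  fin_cases i <;> fin_cases j <;> rfl

theorem Matrix.IsSymm.eta_fin_four {α : Type*} {S : Matrix (Fin 4) (Fin 4) α} (hS : S.IsSymm) :
    S = !![S 0 0, S 0 1, S 0 2, S 0 3; S 0 1, S 1 1, S 1 2, S 1 3;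
      S 0 2, S 1 2, S 2 2, S 2 3; S 0 3, S 1 3, S 2 3, S 3 3] := by
  ext i j
  fin_cases i <;> fin_cases j <;> first | rfl | exact hS.apply _ _

theorem det_scalar_sub_mul_Jblock_two {S : Matrix (Fin (2 * 2)) (Fin (2 * 2)) ℝ} (hS : S.IsSymm)
    (r : ℝ) :
    (scalar (Fin (2 * 2)) r - S * Jblock 2).det =
      r ^ 4 + ((blk S 0 0).det + (blk S 1 1).det + 2 * (blk S 0 1).det) * r ^ 2 + S.det := by
  rw [hS.eta_fin_four, Jblock_two]
  simp only [scalar_apply, cons_mul, Nat.reduceAdd, vecMul_cons, head_cons, smul_cons, mul_zero,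
    mul_one, tail_cons, empty_vecMul, add_zero, add_cons, Equiv.symm_apply_apply,
    det_succ_row_zero, Matrix.sub_apply, of_apply, submatrix_apply, Fin.succAbove, cons_val,
    det_unique, Fin.default_eq_zero, Fin.reduceSucc, Fin.sum_univ_succ, Fin.coe_ofNat_eq_mod,
    Nat.zero_mod, ↓reduceIte, Finset.univ_unique, Finset.sum_singleton, Fin.reduceCastSucc,
    Fin.reduceLT, diagonal_apply_eq, ne_eq, Fin.reduceEq, not_false_eq_true, diagonal_apply_ne,
    blk, Nat.mod_succ, Fin.reduceFinMk]
  ring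

theorem submatrix_finSumFinEquiv_eq_fromBlocks_blk (S : Matrix (Fin (2 * 2)) (Fin (2 * 2)) ℝ) :
    S.submatrix finSumFinEquiv finSumFinEquiv =
      fromBlocks (blk S 0 0) (blk S 0 1) (blk S 1 0) (blk S 1 1) := by
  ext (i | i) (j | j) <;> fin_cases i <;> fin_cases j <;> rfl

theorem Matrix.IsHermitian.blk_one_zero {S : Matrix (Fin (2 * 2)) (Fin (2 * 2)) ℝ}
    (hS : S.IsHermitian) : blk S 1 0 = (blk S 0 1)ᴴ := by
  ext i j
  exact (hS.apply _ _).symm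

theorem add_le_add_and_abs_sub_le_abs_sub {a b d e₁ e₂ : ℝ} (ha : 0 ≤ a) (hb : 0 ≤ b)
    (hsum : e₁ ^ 2 + e₂ ^ 2 = a ^ 2 + b ^ 2 + 2 * d) (hprod : |e₁ * e₂| + |d| ≤ a * b) :
    e₁ + e₂ ≤ a + b ∧ |a - b| ≤ |e₁ - e₂| := by
  constructor
  · refine (abs_le_of_sq_le_sq' ?_ (by positivity)).2
    nlinarith [le_abs_self d, le_abs_self (e₁ * e₂)]
  · exact sq_le_sq.mp (by nlinarith [neg_abs_le d, le_abs_self (e₁ * e₂)])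

theorem stmt18_general (S : Matrix (Fin (2 * 2)) (Fin (2 * 2)) ℝ) (hS : S.PosDef)
    (ε₁ ε₂ : ℝ)
    (hε : hasEigenemittances S ![ε₁, ε₂]) :
    ε₁ + ε₂ ≤ Real.sqrt (blk S 0 0).det + Real.sqrt (blk S 1 1).det ∧
    |Real.sqrt (blk S 0 0).det - Real.sqrt (blk S 1 1).det| ≤ |ε₁ - ε₂| := by
  have hpoly (r : ℝ) :=
    (det_scalar_sub_mul_Jblock_two (isHermitian_iff_isSymm.mp hS.1) r).symm.trans
      (hε.det_scalar_sub r)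
  simp only [Fin.prod_univ_two, cons_val_zero, cons_val_one] at hpoly
  have hdet : S.det = (ε₁ * ε₂) ^ 2 := by linear_combination hpoly 0
  have hblocks : (fromBlocks (blk S 0 0) (blk S 0 1) (blk S 0 1)ᴴ (blk S 1 1)).PosDef := by
    rw [← hS.1.blk_one_zero, ← submatrix_finSumFinEquiv_eq_fromBlocks_blk]
    exact hS.submatrix finSumFinEquiv.injective
  have hineq := sqrt_det_fromBlocks_add_abs_det_le hblocks
  rw [← hS.1.blk_one_zero, ← submatrix_finSumFinEquiv_eq_fromBlocks_blk,
    det_submatrix_equiv_self, hdet, Real.sqrt_sq_eq_abs] at hineq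
  refine add_le_add_and_abs_sub_le_abs_sub (Real.sqrt_nonneg _) (Real.sqrt_nonneg _) ?_ hineq
  have hA : (blk S 0 0).PosDef := hblocks.submatrix Sum.inl_injective
  have hB : (blk S 1 1).PosDef := hblocks.submatrix Sum.inr_injective
  rw [Real.sq_sqrt hA.det_pos.le, Real.sq_sqrt hB.det_pos.le]
  linear_combination hpoly 0 - hpoly 1

/-- Necessity (n = 2): the projected emittances of a 4×4 beam matrix satisfy
`ε̃₁ + ε̃₂ ≥ ε₁ + ε₂` and `|ε̃₁ − ε̃₂| ≤ |ε₁ − ε₂|`. -/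
theorem stmt18 (S : Matrix (Fin (2 * 2)) (Fin (2 * 2)) ℝ) (hS : S.PosDef)
    (ε₁ ε₂ : ℝ) (h₁ : 0 < ε₁) (h₂ : 0 < ε₂)
    (hε : hasEigenemittances S ![ε₁, ε₂]) :
    ε₁ + ε₂ ≤ Real.sqrt (blk S 0 0).det + Real.sqrt (blk S 1 1).det ∧
    |Real.sqrt (blk S 0 0).det - Real.sqrt (blk S 1 1).det| ≤ |ε₁ - ε₂| :=
  stmt18_general S hS ε₁ ε₂ hε
end
end

section
/- (Sufficiency, n=2) Let ε₁, ε₂, ε̃₁, ε̃₂ be positive real numbers satisfying ε̃₁ + ε̃₂ ≥ ε₁ + ε₂ and |ε̃₁ − ε̃₂| ≤ |ε₁ − ε₂|. Then there exists a 4×4 real symmetric positive definite matrix Σ whose eigenemittances are ε₁, ε₂ and whose projected emittances are ε̃₁, ε̃₂. -/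
/-!
Take `Σ = [[a I, B], [B, d I]]` with `B = diag(b, c)`. Its diagonal blocks have determinants
`a²` and `d²`, and `ΣJ₄` has characteristic polynomial
`X⁴ + (a² + d² + 2bc) X² + (ad - b²)(ad - c²)`, while `Σ` is positive definite as soon as
`b², c² < ad`. Matching this with `(X² + ε₁²)(X² + ε₂²)` for `a = ε̃₁`, `d = ε̃₂` asks for
`b c = s := (ε₁² + ε₂² - ε̃₁² - ε̃₂²)/2` and `(P - b²)(P - c²) = (ε₁ε₂)²` with `P = ε̃₁ε̃₂`;
the two hypotheses on the emittances say exactly that `|s| ≤ P - ε₁ε₂`, which is what makes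
`(b ± c)² = ((P ± s)² - (ε₁ε₂)²)/P` solvable with `b², c² < P`.
-/

open Matrix Polynomial

noncomputable section

def beamMatrix (a d b c : ℝ) : Matrix (Fin (2 * 2)) (Fin (2 * 2)) ℝ :=
  !![a, 0, b, 0; 0, a, 0, c; b, 0, d, 0; 0, c, 0, d]

theorem charpoly_beamMatrix_mul_Jblock (a d b c : ℝ) :
    ((beamMatrix a d b c * Jblock 2).map Complex.ofReal).charpoly =
      X ^ 4 + C ((a ^ 2 + d ^ 2 + 2 * (b * c) : ℝ) : ℂ) * X ^ 2
        + C (((a * d - b ^ 2) * (a * d - c ^ 2) : ℝ) : ℂ) := by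
  rw [Jblock_two, beamMatrix]
  simp [charpoly, det_succ_row_zero, Fin.sum_univ_succ, charmatrix_apply, Fin.succAbove, C_ofNat]
  ring

theorem hasEigenemittances_two_iff {S : Matrix (Fin (2 * 2)) (Fin (2 * 2)) ℝ} {ε₁ ε₂ : ℝ} :
    hasEigenemittances S ![ε₁, ε₂] ↔ ((S * Jblock 2).map Complex.ofReal).charpoly =
      X ^ 4 + C ((ε₁ ^ 2 + ε₂ ^ 2 : ℝ) : ℂ) * X ^ 2 + C (((ε₁ * ε₂) ^ 2 : ℝ) : ℂ) := by
  have factor (z : ℂ) :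
      (X - C (Complex.I * z)) * (X + C (Complex.I * z)) = X ^ 2 + C (z ^ 2) := by
    have h : C (Complex.I * z) ^ 2 = -C (z ^ 2) := by
      rw [← map_pow, mul_pow, Complex.I_sq, neg_one_mul, map_neg]
    linear_combination -h
  rw [hasEigenemittances, Fin.prod_univ_two]
  simp only [cons_val_zero, cons_val_one, factor]
  push_cast
  simp only [C_add, C_mul, C_pow]
  ring_nf

theorem det_blk_beamMatrix_zero_zero (a d b c : ℝ) :
    (blk (beamMatrix a d b c) 0 0).det = a ^ 2 := by
  rw [show blk (beamMatrix a d b c) 0 0 = !![a, 0; 0, a] by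
    ext i j; fin_cases i <;> fin_cases j <;> rfl]
  simp [det_fin_two_of, sq]

theorem det_blk_beamMatrix_one_one (a d b c : ℝ) :
    (blk (beamMatrix a d b c) 1 1).det = d ^ 2 := by
  rw [show blk (beamMatrix a d b c) 1 1 = !![d, 0; 0, d] by
    ext i j; fin_cases i <;> fin_cases j <;> rfl]
  simp [det_fin_two_of, sq]

section BinaryQuadratic

variable {a b d y z : ℝ}

-- `a (a y² + 2 b y z + d z²) = (a y + b z)² + (a d - b²) z²`
theorem binary_quadratic_nonneg (ha : 0 < a) (hb : b ^ 2 < a * d) :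
    0 ≤ a * y ^ 2 + 2 * b * (y * z) + d * z ^ 2 := by
  nlinarith [sq_nonneg (a * y + b * z), mul_nonneg (sub_pos.mpr hb).le (sq_nonneg z)]

theorem binary_quadratic_pos (ha : 0 < a) (hb : b ^ 2 < a * d) (h : y ≠ 0 ∨ z ≠ 0) :
    0 < a * y ^ 2 + 2 * b * (y * z) + d * z ^ 2 := by
  rcases eq_or_ne z 0 with rfl | hz
  · have hy : y ≠ 0 := by simpa using h
    have hy2 : 0 < y ^ 2 := by positivity
    nlinarith [mul_pos ha hy2]
  · have hz2 : 0 < z ^ 2 := by positivity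
    nlinarith [sq_nonneg (a * y + b * z), mul_pos (sub_pos.mpr hb) hz2]

end BinaryQuadratic

theorem beamMatrix_posDef {a d b c : ℝ} (ha : 0 < a) (hb : b ^ 2 < a * d) (hc : c ^ 2 < a * d) :
    (beamMatrix a d b c).PosDef := by
  rw [posDef_iff_dotProduct_mulVec]
  refine ⟨?_, fun x hx => ?_⟩
  · ext i j
    fin_cases i <;> fin_cases j <;> simp [beamMatrix]
  have hform : star x ⬝ᵥ beamMatrix a d b c *ᵥ x =
      (a * x 0 ^ 2 + 2 * b * (x 0 * x 2) + d * x 2 ^ 2)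
        + (a * x 1 ^ 2 + 2 * c * (x 1 * x 3) + d * x 3 ^ 2) := by
    simp [beamMatrix, dotProduct, mulVec, Fin.sum_univ_four]
    ring
  have hx' : (x 0 ≠ 0 ∨ x 2 ≠ 0) ∨ (x 1 ≠ 0 ∨ x 3 ≠ 0) := by
    by_contra! h
    exact hx (funext fun i => by fin_cases i <;> simp [h.1.1, h.1.2, h.2.1, h.2.2])
  rw [hform]
  rcases hx' with h | h
  · exact add_pos_of_pos_of_nonneg (binary_quadratic_pos ha hb h) (binary_quadratic_nonneg ha hc)
  · exact add_pos_of_nonneg_of_pos (binary_quadratic_nonneg ha hb) (binary_quadratic_pos ha hc h)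

theorem exists_mul_eq_and_sub_sq_mul_sub_sq_eq {P E s : ℝ} (hE : 0 < E) (hs : |s| ≤ P - E) :
    ∃ b c : ℝ, b * c = s ∧ b ^ 2 < P ∧ c ^ 2 < P ∧ (P - b ^ 2) * (P - c ^ 2) = E ^ 2 := by
  have hP : 0 < P := by linarith [abs_nonneg s]
  obtain ⟨hs_lo, hs_hi⟩ := abs_le.mp hs
  obtain ⟨u, hu⟩ : ∃ u : ℝ, P * u ^ 2 = (P + s) ^ 2 - E ^ 2 :=
    ⟨√(((P + s) ^ 2 - E ^ 2) / P), by
      rw [Real.sq_sqrt (div_nonneg (by nlinarith) hP.le)]; field_simp⟩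
  obtain ⟨v, hv⟩ : ∃ v : ℝ, P * v ^ 2 = (P - s) ^ 2 - E ^ 2 :=
    ⟨√(((P - s) ^ 2 - E ^ 2) / P), by
      rw [Real.sq_sqrt (div_nonneg (by nlinarith) hP.le)]; field_simp⟩
  have hdiff : u ^ 2 - v ^ 2 = 4 * s :=
    mul_left_cancel₀ hP.ne' (by linear_combination hu - hv)
  refine ⟨(u + v) / 2, (u - v) / 2, by linear_combination hdiff / 4, ?_⟩
  have hprod : (P - ((u + v) / 2) ^ 2) * (P - ((u - v) / 2) ^ 2) = E ^ 2 := by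
    linear_combination (-1 / 2) * (hu + hv) + ((u ^ 2 - v ^ 2) / 4 + s) / 4 * hdiff
  have hsum : 0 < (P - ((u + v) / 2) ^ 2) + (P - ((u - v) / 2) ^ 2) := by
    have : s ^ 2 < P ^ 2 + E ^ 2 := by nlinarith [sq_abs s, abs_nonneg s]
    nlinarith
  have hpos : 0 < (P - ((u + v) / 2) ^ 2) * (P - ((u - v) / 2) ^ 2) := by
    rw [hprod]; positivity
  -- two reals with positive product and positive sum are both positive
  refine ⟨?_, ?_, hprod⟩ <;> nlinarith

theorem abs_emittance_gap_le {ε₁ ε₂ εp₁ εp₂ : ℝ} (h₀ : 0 ≤ ε₁ + ε₂)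
    (hsum : ε₁ + ε₂ ≤ εp₁ + εp₂) (hdiff : |εp₁ - εp₂| ≤ |ε₁ - ε₂|) :
    |(ε₁ ^ 2 + ε₂ ^ 2 - εp₁ ^ 2 - εp₂ ^ 2) / 2| ≤ εp₁ * εp₂ - ε₁ * ε₂ := by
  have hsum_sq : (ε₁ + ε₂) ^ 2 ≤ (εp₁ + εp₂) ^ 2 := pow_le_pow_left₀ h₀ hsum 2
  have hdiff_sq : (εp₁ - εp₂) ^ 2 ≤ (ε₁ - ε₂) ^ 2 := sq_le_sq.mpr hdiff
  rw [abs_le]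
  constructor <;> nlinarith

/-- Sufficiency (n = 2): any positive reals satisfying `ε̃₁ + ε̃₂ ≥ ε₁ + ε₂` and
`|ε̃₁ − ε̃₂| ≤ |ε₁ − ε₂|` are realized as the eigenemittances and projected
emittances of some 4×4 beam matrix. -/
theorem stmt19 (ε₁ ε₂ εp₁ εp₂ : ℝ)
    (h₁ : 0 < ε₁) (h₂ : 0 < ε₂) (hp₁ : 0 < εp₁) (hp₂ : 0 < εp₂)
    (hsum : ε₁ + ε₂ ≤ εp₁ + εp₂) (hdiff : |εp₁ - εp₂| ≤ |ε₁ - ε₂|) :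
    ∃ S : Matrix (Fin (2 * 2)) (Fin (2 * 2)) ℝ, S.PosDef ∧
      hasEigenemittances S ![ε₁, ε₂] ∧
      Real.sqrt (blk S 0 0).det = εp₁ ∧ Real.sqrt (blk S 1 1).det = εp₂ := by
  obtain ⟨b, c, hbc, hb, hc, hprod⟩ := exists_mul_eq_and_sub_sq_mul_sub_sq_eq
    (mul_pos h₁ h₂) (abs_emittance_gap_le (by positivity) hsum hdiff)
  refine ⟨beamMatrix εp₁ εp₂ b c, beamMatrix_posDef hp₁ hb hc, ?_, ?_, ?_⟩
  · have hcoeff : εp₁ ^ 2 + εp₂ ^ 2 + 2 * (b * c) = ε₁ ^ 2 + ε₂ ^ 2 := by rw [hbc]; ring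
    rw [hasEigenemittances_two_iff, charpoly_beamMatrix_mul_Jblock, hcoeff, hprod]
  · rw [det_blk_beamMatrix_zero_zero, Real.sqrt_sq hp₁.le]
  · rw [det_blk_beamMatrix_one_one, Real.sqrt_sq hp₂.le]
end
end
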